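/- arXiv:1011.5729 — 6 statements merged into one kernel-verified Lean document; each statement's English description precedes it below -/
import Mathlib

section
/- There exists a constant C > 0 such that for every integer m \geq 1 and every y \in [0,1], \big| B_m f(y) - f(y) - y(1-y) f''(y)/(2m) \big| \leq C/m^2. -/
open Finset

/-- The `m`-th Bernstein polynomial of `f`, evaluated at `y`:
`B_m f (y) = ∑_{k=0}^m (m choose k) y^k (1-y)^{m-k} f(k/m)`. -/
noncomputable def bernsteinApprox (f : ℝ → ℝ) (m : ℕ) (y : ℝ) : ℝ :=
  ∑ k ∈ Finset.range (m + 1), (m.choose k : ℝ) * y ^ k * (1 - y) ^ (m - k) * f (k / m)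

/-!
Expand `f` around `y` to third order with Lagrange remainder and average over the Bernstein
weights `p_{m,k}(y)`. The weights are the binomial distribution of `k`, whose central moments
of `k/m` of orders `1, 2, 3, 4` are `0`, `y(1-y)/m`, `y(1-y)(1-2y)/m²` and `O(1/m²)`; they follow
from the factorial moments `∑ p_{m,k}(y) k(k-1)⋯(k-j+1) = m(m-1)⋯(m-j+1) yʲ`. So the Taylor
polynomial contributes `f(y) + y(1-y) f''(y)/(2m) + O(‖f'''‖/m²)` and the remainder
`O(‖f⁗‖/m²)`.
-/

open Polynomial Set
open scoped Nat

theorem Nat.choose_add_mul_descFactorial (j n i : ℕ) :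
    (j + n).choose (j + i) * (j + i).descFactorial j = (j + n).descFactorial j * n.choose i := by
  rw [Nat.descFactorial_eq_factorial_mul_choose, Nat.descFactorial_eq_factorial_mul_choose,
    mul_left_comm, Nat.choose_mul (Nat.le_add_right j i)]
  simp only [Nat.add_sub_cancel_left]
  ring

namespace bernsteinPolynomial

section CommRing

variable {R : Type*} [CommRing R]

theorem eval_eq (m k : ℕ) (y : R) :
    (bernsteinPolynomial R m k).eval y = m.choose k * y ^ k * (1 - y) ^ (m - k) := by
  simp [bernsteinPolynomial]

theorem sum_eval (m : ℕ) (y : R) :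
    ∑ k ∈ range (m + 1), (bernsteinPolynomial R m k).eval y = 1 := by
  simpa [eval_finsetSum] using congrArg (eval y) (bernsteinPolynomial.sum R m)

theorem sum_eval_mul_descFactorial (m j : ℕ) (y : R) :
    ∑ k ∈ range (m + 1), (bernsteinPolynomial R m k).eval y * k.descFactorial j
      = m.descFactorial j * y ^ j := by
  obtain hmj | hjm := lt_or_ge m j
  · rw [Nat.descFactorial_eq_zero_iff_lt.2 hmj, Nat.cast_zero, zero_mul]
    refine sum_eq_zero fun k hk => ?_
    rw [Nat.descFactorial_eq_zero_iff_lt.2 (by grind), Nat.cast_zero, mul_zero]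
  obtain ⟨n, rfl⟩ := Nat.exists_eq_add_of_le hjm
  have below :
      ∑ k ∈ range j, (bernsteinPolynomial R (j + n) k).eval y * k.descFactorial j = 0 :=
    sum_eq_zero fun k hk => by
      rw [Nat.descFactorial_eq_zero_iff_lt.2 (mem_range.1 hk), Nat.cast_zero, mul_zero]
  have shift : ∀ i ∈ range (n + 1),
      (bernsteinPolynomial R (j + n) (j + i)).eval y * ((j + i).descFactorial j : ℕ)
        = (j + n).descFactorial j * y ^ j * (bernsteinPolynomial R n i).eval y := by
    intro i _
    rw [eval_eq, eval_eq, Nat.add_sub_add_left, pow_add]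
    have := congrArg (Nat.cast (R := R)) (Nat.choose_add_mul_descFactorial j n i)
    push_cast at this
    linear_combination y ^ j * y ^ i * (1 - y) ^ (n - i) * this
  rw [add_assoc, sum_range_add, below, zero_add, sum_congr rfl shift, ← mul_sum, sum_eval,
    mul_one]

theorem sum_eval_mul_eq_of_descFactorial {d : ℕ} (c : Fin d → R) {g : ℕ → R}
    (hg : ∀ k, g k = ∑ j, c j * k.descFactorial j) (m : ℕ) (y : R) :
    ∑ k ∈ range (m + 1), (bernsteinPolynomial R m k).eval y * g k
      = ∑ j, c j * m.descFactorial j * y ^ (j : ℕ) := by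
  simp_rw [hg, mul_sum, mul_left_comm _ (c _)]
  rw [sum_comm]
  simp_rw [← mul_sum, sum_eval_mul_descFactorial, mul_assoc]

/- In the central moments below, `![…]` lists the coefficients of `(k - m y)ⁿ` in the basis
`k.descFactorial j`. -/

theorem sum_eval_mul_sub_mul (m : ℕ) (y : R) :
    ∑ k ∈ range (m + 1), (bernsteinPolynomial R m k).eval y * ((k : R) - m * y) = 0 := by
  rw [sum_eval_mul_eq_of_descFactorial ![-(m * y), 1] fun k => by simp [Fin.sum_univ_two]; ring]
  simp [Fin.sum_univ_two]

theorem sum_eval_mul_sub_mul_sq (m : ℕ) (y : R) :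
    ∑ k ∈ range (m + 1), (bernsteinPolynomial R m k).eval y * ((k : R) - m * y) ^ 2
      = m * y * (1 - y) := by
  rw [sum_eval_mul_eq_of_descFactorial ![(m * y) ^ 2, 1 - 2 * (m * y), 1] fun k => by
    simp [Fin.sum_univ_three, ← descPochhammer_eval_eq_descFactorial, descPochhammer_succ_eval]
    ring]
  simp [Fin.sum_univ_three, ← descPochhammer_eval_eq_descFactorial, descPochhammer_succ_eval]
  ring

theorem sum_eval_mul_sub_mul_pow_three (m : ℕ) (y : R) :
    ∑ k ∈ range (m + 1), (bernsteinPolynomial R m k).eval y * ((k : R) - m * y) ^ 3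
      = m * y * (1 - y) * (1 - 2 * y) := by
  rw [sum_eval_mul_eq_of_descFactorial
    ![-(m * y) ^ 3, 1 - 3 * (m * y) + 3 * (m * y) ^ 2, 3 - 3 * (m * y), 1] fun k => by
      simp [Fin.sum_univ_four, ← descPochhammer_eval_eq_descFactorial, descPochhammer_succ_eval]
      ring]
  simp [Fin.sum_univ_four, ← descPochhammer_eval_eq_descFactorial, descPochhammer_succ_eval]
  ring

theorem sum_eval_mul_sub_mul_pow_four (m : ℕ) (y : R) :
    ∑ k ∈ range (m + 1), (bernsteinPolynomial R m k).eval y * ((k : R) - m * y) ^ 4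
      = m * y * (1 - y) * (1 + 3 * (m - 2) * y * (1 - y)) := by
  rw [sum_eval_mul_eq_of_descFactorial
    ![(m * y) ^ 4, 1 - 4 * (m * y) + 6 * (m * y) ^ 2 - 4 * (m * y) ^ 3,
      7 - 12 * (m * y) + 6 * (m * y) ^ 2, 6 - 4 * (m * y), 1] fun k => by
      simp [Fin.sum_univ_five, ← descPochhammer_eval_eq_descFactorial, descPochhammer_succ_eval]
      ring]
  simp [Fin.sum_univ_five, ← descPochhammer_eval_eq_descFactorial, descPochhammer_succ_eval]
  ring

end CommRing

section Field

variable {K : Type*} [Field K] {m : ℕ}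

theorem sum_eval_mul_div_sub_pow (hm : (m : K) ≠ 0) (y : K) (i : ℕ) :
    ∑ k ∈ range (m + 1), (bernsteinPolynomial K m k).eval y * ((k : K) / m - y) ^ i
      = (∑ k ∈ range (m + 1), (bernsteinPolynomial K m k).eval y * ((k : K) - m * y) ^ i)
          / m ^ i := by
  rw [sum_div]
  refine sum_congr rfl fun k _ => ?_
  rw [mul_div_assoc, ← div_pow, sub_div, mul_div_cancel_left₀ _ hm]

theorem sum_eval_mul_cubic (hm : (m : K) ≠ 0) (y : K) (c : ℕ → K) :
    ∑ k ∈ range (m + 1),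
        (bernsteinPolynomial K m k).eval y * ∑ i ∈ range 4, c i * ((k : K) / m - y) ^ i
      = c 0 + c 2 * (y * (1 - y)) / m + c 3 * (y * (1 - y) * (1 - 2 * y)) / m ^ 2 := by
  simp_rw [mul_sum]
  rw [sum_comm]
  simp_rw [mul_left_comm _ (c _), ← mul_sum, sum_eval_mul_div_sub_pow hm]
  rw [sum_range_succ, sum_range_succ, sum_range_succ, sum_range_one]
  simp only [pow_zero, mul_one, sum_eval, pow_one, sum_eval_mul_sub_mul, sum_eval_mul_sub_mul_sq,
    sum_eval_mul_sub_mul_pow_three]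
  field_simp
  ring

end Field

theorem eval_nonneg {m k : ℕ} {y : ℝ} (hy : y ∈ Icc (0 : ℝ) 1) :
    0 ≤ (bernsteinPolynomial ℝ m k).eval y := by
  rw [eval_eq]
  exact mul_nonneg (mul_nonneg (Nat.cast_nonneg _) (pow_nonneg hy.1 _))
    (pow_nonneg (sub_nonneg.2 hy.2) _)

theorem sum_eval_mul_div_sub_pow_four_le {m : ℕ} (hm : 1 ≤ m) {y : ℝ}
    (hy : y ∈ Icc (0 : ℝ) 1) :
    ∑ k ∈ range (m + 1), (bernsteinPolynomial ℝ m k).eval y * ((k : ℝ) / m - y) ^ 4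
      ≤ 1 / m ^ 2 := by
  have hm' : (1 : ℝ) ≤ m := by exact_mod_cast hm
  rw [sum_eval_mul_div_sub_pow (by positivity), sum_eval_mul_sub_mul_pow_four,
    div_le_div_iff₀ (by positivity) (by positivity)]
  have hp : 0 ≤ y * (1 - y) := mul_nonneg hy.1 (sub_nonneg.2 hy.2)
  have hp' : y * (1 - y) ≤ 1 / 4 := by nlinarith [sq_nonneg (y - 1 / 2)]
  set p := y * (1 - y)
  have hm3 : (0 : ℝ) ≤ m ^ 3 := by positivity
  nlinarith [mul_le_mul_of_nonneg_left hp' hm3, mul_nonneg hm3 (mul_nonneg hp hp),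
    mul_le_mul_of_nonneg_left (mul_le_mul hp' hp' hp (by norm_num))
      (by positivity : (0 : ℝ) ≤ m ^ 4),
    mul_le_mul_of_nonneg_left hm' hm3]

end bernsteinPolynomial

theorem abs_sub_sum_iteratedDeriv_le {f : ℝ → ℝ} {U : Set ℝ} (hU : IsOpen U) {n : ℕ}
    (hf : ContDiffOn ℝ (n + 1) f U) {x₀ x M : ℝ} (hsub : uIcc x₀ x ⊆ U)
    (hM : ∀ t ∈ uIcc x₀ x, |iteratedDeriv (n + 1) f t| ≤ M) :
    |f x - ∑ i ∈ range (n + 1), iteratedDeriv i f x₀ / i ! * (x - x₀) ^ i|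
      ≤ M / (n + 1)! * |x - x₀| ^ (n + 1) := by
  rcases eq_or_ne x₀ x with rfl | hx
  · simp [sum_range_succ']
  obtain ⟨x', hx', hrem⟩ := taylor_mean_remainder_lagrange_iteratedDeriv hx (hf.mono hsub)
  have hpoly : taylorWithinEval f n (uIcc x₀ x) x₀ x
      = ∑ i ∈ range (n + 1), iteratedDeriv i f x₀ / i ! * (x - x₀) ^ i := by
    rw [taylor_within_apply]
    refine sum_congr rfl fun i hi => ?_
    have hfx₀ : ContDiffAt ℝ i f x₀ :=
      (hf.contDiffAt (hU.mem_nhds (hsub left_mem_uIcc))).of_le (by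
        exact_mod_cast (mem_range.1 hi).le)
    rw [iteratedDerivWithin_eq_iteratedDeriv (uniqueDiffOn_uIcc hx) hfx₀ left_mem_uIcc,
      smul_eq_mul]
    ring
  rw [← hpoly, hrem, abs_div, abs_mul, abs_pow, Nat.abs_cast, div_mul_eq_mul_div]
  gcongr
  exact hM x' (uIoo_subset_uIcc_self hx')

theorem exists_abs_iteratedDeriv_le {f : ℝ → ℝ} {U K : Set ℝ} (hU : IsOpen U)
    (hK : IsCompact K) (hKU : K ⊆ U) {n : ℕ∞} (hf : ContDiffOn ℝ n f U) {i : ℕ}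
    (hi : i ≤ n) :
    ∃ M, ∀ t ∈ K, |iteratedDeriv i f t| ≤ M := by
  have hcont : ContinuousOn (iteratedDeriv i f) U :=
    (hf.continuousOn_iteratedDerivWithin (by exact_mod_cast hi) hU.uniqueDiffOn).congr
      (iteratedDerivWithin_of_isOpen hU).symm
  exact hK.exists_bound_of_continuousOn (hcont.mono hKU)

theorem bernsteinApprox_eq_sum_eval (f : ℝ → ℝ) (m : ℕ) (y : ℝ) :
    bernsteinApprox f m y
      = ∑ k ∈ range (m + 1), (bernsteinPolynomial ℝ m k).eval y * f (k / m) := by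
  simp only [bernsteinApprox, bernsteinPolynomial.eval_eq]

theorem natCast_div_mem_Icc {k m : ℕ} (hk : k ∈ range (m + 1)) :
    (k : ℝ) / m ∈ Icc (0 : ℝ) 1 :=
  ⟨by positivity,
    div_le_one_of_le₀ (by exact_mod_cast Nat.lt_succ_iff.1 (mem_range.1 hk)) (by positivity)⟩

theorem abs_sum_eval_mul_sub_taylor_le {f : ℝ → ℝ} {U : Set ℝ} (hU : IsOpen U)
    (hUI : Icc (0 : ℝ) 1 ⊆ U) (hf : ContDiffOn ℝ 4 f U) {M : ℝ}
    (hM : ∀ t ∈ Icc (0 : ℝ) 1, |iteratedDeriv 4 f t| ≤ M) {m : ℕ} (hm : 1 ≤ m)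
    {y : ℝ} (hy : y ∈ Icc (0 : ℝ) 1) :
    |∑ k ∈ range (m + 1), (bernsteinPolynomial ℝ m k).eval y *
        (f (k / m) - ∑ i ∈ range 4, iteratedDeriv i f y / i ! * ((k : ℝ) / m - y) ^ i)|
      ≤ M / 24 / m ^ 2 := by
  have hM₀ : 0 ≤ M := (abs_nonneg _).trans (hM y hy)
  calc _ ≤ ∑ k ∈ range (m + 1), (bernsteinPolynomial ℝ m k).eval y *
          |f (k / m) - ∑ i ∈ range 4, iteratedDeriv i f y / i ! * ((k : ℝ) / m - y) ^ i| := by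
        refine (abs_sum_le_sum_abs _ _).trans_eq (sum_congr rfl fun k _ => ?_)
        rw [abs_mul, abs_of_nonneg (bernsteinPolynomial.eval_nonneg hy)]
    _ ≤ ∑ k ∈ range (m + 1),
          (bernsteinPolynomial ℝ m k).eval y * (M / 24 * ((k : ℝ) / m - y) ^ 4) := by
        gcongr with k hk
        · exact bernsteinPolynomial.eval_nonneg hy
        have hsub : uIcc y ((k : ℝ) / m) ⊆ Icc 0 1 :=
          uIcc_subset_Icc hy (natCast_div_mem_Icc hk)
        simpa [Nat.factorial, Even.pow_abs ⟨2, rfl⟩] using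
          abs_sub_sum_iteratedDeriv_le (n := 3) hU hf (hsub.trans hUI) fun t ht => hM t (hsub ht)
    _ = M / 24 * ∑ k ∈ range (m + 1),
          (bernsteinPolynomial ℝ m k).eval y * ((k : ℝ) / m - y) ^ 4 := by
        rw [mul_sum]
        exact sum_congr rfl fun k _ => by ring
    _ ≤ M / 24 * (1 / m ^ 2) := by
        gcongr
        exact bernsteinPolynomial.sum_eval_mul_div_sub_pow_four_le hm hy
    _ = M / 24 / m ^ 2 := by ring

theorem abs_bernsteinApprox_sub_le {f : ℝ → ℝ} {U : Set ℝ} (hU : IsOpen U)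
    (hUI : Icc (0 : ℝ) 1 ⊆ U) (hf : ContDiffOn ℝ 4 f U) {M₃ M₄ : ℝ}
    (hM₃ : ∀ t ∈ Icc (0 : ℝ) 1, |iteratedDeriv 3 f t| ≤ M₃)
    (hM₄ : ∀ t ∈ Icc (0 : ℝ) 1, |iteratedDeriv 4 f t| ≤ M₄) {m : ℕ} (hm : 1 ≤ m)
    {y : ℝ} (hy : y ∈ Icc (0 : ℝ) 1) :
    |bernsteinApprox f m y - f y - y * (1 - y) * deriv (deriv f) y / (2 * m)|
      ≤ (M₄ / 24 + M₃ / 6) / m ^ 2 := by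
  have hm₀ : (m : ℝ) ≠ 0 := by positivity
  set T : ℝ → ℝ := fun x => ∑ i ∈ range 4, iteratedDeriv i f y / i ! * (x - y) ^ i
  have hT : ∑ k ∈ range (m + 1), (bernsteinPolynomial ℝ m k).eval y * T (k / m)
      = f y + iteratedDeriv 2 f y / 2 * (y * (1 - y)) / m
        + iteratedDeriv 3 f y / 6 * (y * (1 - y) * (1 - 2 * y)) / m ^ 2 := by
    simpa [Nat.factorial] using
      bernsteinPolynomial.sum_eval_mul_cubic hm₀ y (fun i => iteratedDeriv i f y / i !)
  have hf'' : deriv (deriv f) y = iteratedDeriv 2 f y := by simp [iteratedDeriv_succ]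
  have hsplit : bernsteinApprox f m y - f y - y * (1 - y) * deriv (deriv f) y / (2 * m)
      = ∑ k ∈ range (m + 1), (bernsteinPolynomial ℝ m k).eval y * (f (k / m) - T (k / m))
        + iteratedDeriv 3 f y / 6 * (y * (1 - y) * (1 - 2 * y)) / m ^ 2 := by
    simp only [mul_sub, sum_sub_distrib, hT, bernsteinApprox_eq_sum_eval, hf'']
    field_simp
    ring
  have hcubic :
      |iteratedDeriv 3 f y / 6 * (y * (1 - y) * (1 - 2 * y)) / m ^ 2| ≤ M₃ / 6 / m ^ 2 := by
    have hy' : |y * (1 - y) * (1 - 2 * y)| ≤ 1 := by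
      rw [abs_le]
      constructor <;> nlinarith [hy.1, hy.2, mul_nonneg hy.1 (sub_nonneg.2 hy.2)]
    rw [abs_div, abs_mul, abs_div, abs_of_pos (by positivity : (0 : ℝ) < m ^ 2),
      abs_of_pos (by norm_num : (0 : ℝ) < 6)]
    gcongr
    nlinarith [hM₃ y hy, abs_nonneg (iteratedDeriv 3 f y), abs_nonneg (y * (1 - y) * (1 - 2 * y))]
  rw [hsplit]
  calc _ ≤ _ := abs_add_le _ _
    _ ≤ M₄ / 24 / m ^ 2 + M₃ / 6 / m ^ 2 :=
      add_le_add (abs_sum_eval_mul_sub_taylor_le hU hUI hf hM₄ hm hy) hcubic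
    _ = (M₄ / 24 + M₃ / 6) / m ^ 2 := by ring

/-- If `f : ℝ → ℝ` is four times continuously differentiable on an open
interval containing `[0,1]`, then there is a constant `C > 0` such that for every `m ≥ 1`
and every `y ∈ [0,1]`,
`|B_m f (y) - f y - y(1-y) f''(y) / (2m)| ≤ C / m²`. -/
theorem bernstein_second_order_approx (f : ℝ → ℝ) (U : Set ℝ) (hU : IsOpen U)
    (hUI : Set.Icc (0 : ℝ) 1 ⊆ U) (hf : ContDiffOn ℝ 4 f U) :
    ∃ C : ℝ, 0 < C ∧ ∀ m : ℕ, 1 ≤ m → ∀ y ∈ Set.Icc (0 : ℝ) 1,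
      |bernsteinApprox f m y - f y - y * (1 - y) * deriv (deriv f) y / (2 * m)|
        ≤ C / m ^ 2 := by
  obtain ⟨M₃, hM₃⟩ :=
    exists_abs_iteratedDeriv_le hU isCompact_Icc hUI hf (i := 3) (by norm_num)
  obtain ⟨M₄, hM₄⟩ :=
    exists_abs_iteratedDeriv_le hU isCompact_Icc hUI hf (i := 4) (by norm_num)
  have h₃ := (abs_nonneg _).trans (hM₃ 0 (left_mem_Icc.2 zero_le_one))
  have h₄ := (abs_nonneg _).trans (hM₄ 0 (left_mem_Icc.2 zero_le_one))
  refine ⟨M₄ / 24 + M₃ / 6 + 1, by positivity, fun m hm y hy => ?_⟩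
  refine (abs_bernsteinApprox_sub_le hU hUI hf hM₃ hM₄ hm hy).trans ?_
  exact div_le_div_of_nonneg_right (by linarith) (by positivity)
end

section
/- Let m \geq 1 be an integer, \varepsilon \in (0,1/2], M \geq 0 and let c_0, \dots, c_m be complex numbers with |c_k| \leq M for all k. Then for every complex number w = u + iv with u \in [\varepsilon, 1-\varepsilon] and v \in \mathbb{R}, \big| \sum_{k=0}^m \binom{m}{k} w^k (1-w)^{m-k} c_k \big| \leq M (1 + v^2/\varepsilon)^m. In particular, if |v| \leq L/\sqrt{m} for some L > 0, then this sum is bounded in modulus by M \exp(L^2/\varepsilon). -/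
/-! Writing `w = u + iv`, the elementary bound `√(a² + b²) ≤ a + b²/(2ε)` for `a ≥ ε` gives
`‖w‖ + ‖1 - w‖ ≤ 1 + v²/ε`. The triangle inequality and the binomial theorem bound the sum by
`M (‖w‖ + ‖1 - w‖)^m`, and `1 + t ≤ eᵗ` turns `(1 + v²/ε)^m` into `exp (m v²/ε) ≤ exp (L²/ε)`. -/

open Finset Complex

theorem Complex.norm_ofReal_add_mul_I_le {a b δ : ℝ} (hδ : 0 < δ) (ha : δ ≤ a) :
    ‖(a : ℂ) + b * I‖ ≤ a + b ^ 2 / (2 * δ) := by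
  rw [norm_add_mul_I]
  have ht : 0 ≤ b ^ 2 / (2 * δ) := by positivity
  have hb : b ^ 2 = 2 * δ * (b ^ 2 / (2 * δ)) := by field_simp
  refine Real.sqrt_le_iff.mpr ⟨by linarith, ?_⟩
  nlinarith [mul_le_mul_of_nonneg_right ha ht]

theorem norm_sum_choose_mul_pow_mul_pow_mul_le {R : Type*} [SeminormedCommRing R]
    [NormOneClass R] (x y : R) {m : ℕ} {M : ℝ} {c : ℕ → R} (hc : ∀ k ≤ m, ‖c k‖ ≤ M) :
    ‖∑ k ∈ range (m + 1), (m.choose k : R) * x ^ k * y ^ (m - k) * c k‖ ≤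
      M * (‖x‖ + ‖y‖) ^ m := by
  calc ‖∑ k ∈ range (m + 1), (m.choose k : R) * x ^ k * y ^ (m - k) * c k‖
      ≤ ∑ k ∈ range (m + 1), ‖(m.choose k : R) * x ^ k * y ^ (m - k) * c k‖ := norm_sum_le _ _
    _ ≤ ∑ k ∈ range (m + 1), (m.choose k : ℝ) * ‖x‖ ^ k * ‖y‖ ^ (m - k) * M := by
      refine sum_le_sum fun k hk => ?_
      have hck := hc k (Nat.lt_succ_iff.mp (mem_range.mp hk))
      have hchoose : ‖(m.choose k : R)‖ ≤ m.choose k := by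
        simpa using Nat.norm_cast_le (α := R) (m.choose k)
      refine (norm_mul_le _ _).trans ?_
      refine mul_le_mul ?_ hck (norm_nonneg _) (by positivity)
      refine (norm_mul_le _ _).trans (mul_le_mul ?_ (norm_pow_le _ _) (norm_nonneg _)
        (by positivity))
      exact (norm_mul_le _ _).trans (mul_le_mul hchoose (norm_pow_le _ _) (norm_nonneg _)
        (by positivity))
    _ = M * (‖x‖ + ‖y‖) ^ m := by
      rw [add_pow, mul_sum]
      exact sum_congr rfl fun k _ => by ring

theorem Real.one_add_pow_le_exp_mul {t : ℝ} (ht : -1 ≤ t) (n : ℕ) :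
    (1 + t) ^ n ≤ Real.exp (n * t) := by
  rw [Real.exp_nat_mul]
  exact pow_le_pow_left₀ (by linarith) (by linarith [Real.add_one_le_exp t]) n

theorem mul_sq_le_sq_of_abs_le_div_sqrt {n : ℕ} {v L : ℝ} (hv : |v| ≤ L / √n) :
    n * v ^ 2 ≤ L ^ 2 := by
  rcases Nat.eq_zero_or_pos n with rfl | hn
  · simpa using sq_nonneg L
  have hsqrt : 0 < √(n : ℝ) := Real.sqrt_pos.mpr (by exact_mod_cast hn)
  have h : |v| * √n ≤ L := (le_div_iff₀ hsqrt).mp hv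
  calc (n : ℝ) * v ^ 2 = (|v| * √n) ^ 2 := by
        rw [mul_pow, sq_abs, Real.sq_sqrt (Nat.cast_nonneg n), mul_comm]
    _ ≤ L ^ 2 := pow_le_pow_left₀ (by positivity) h 2

theorem bernstein_complex_bound_general (m : ℕ) (ε M : ℝ)
    (hε : ε ∈ Set.Ioc (0 : ℝ) (1/2)) (c : ℕ → ℂ)
    (hc : ∀ k ≤ m, ‖c k‖ ≤ M) (u v : ℝ) (hu : u ∈ Set.Icc ε (1 - ε)) :
    ‖∑ k ∈ Finset.range (m + 1),
        (m.choose k : ℂ) * (u + v * Complex.I) ^ k * (1 - (u + v * Complex.I)) ^ (m - k) * c k‖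
      ≤ M * (1 + v ^ 2 / ε) ^ m ∧
    ∀ L : ℝ, 0 < L → |v| ≤ L / Real.sqrt m →
      ‖∑ k ∈ Finset.range (m + 1),
          (m.choose k : ℂ) * (u + v * Complex.I) ^ k * (1 - (u + v * Complex.I)) ^ (m - k) * c k‖
        ≤ M * Real.exp (L ^ 2 / ε) := by
  obtain ⟨hε0, -⟩ := hε
  have hM : 0 ≤ M := (norm_nonneg _).trans (hc 0 m.zero_le)
  have hw : ‖(u : ℂ) + v * I‖ ≤ u + v ^ 2 / (2 * ε) := norm_ofReal_add_mul_I_le hε0 hu.1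
  have hw' : ‖1 - ((u : ℂ) + v * I)‖ ≤ (1 - u) + v ^ 2 / (2 * ε) := by
    have h := norm_ofReal_add_mul_I_le (a := 1 - u) (b := -v) hε0 (by linarith [hu.2])
    rwa [neg_sq, show ((1 - u : ℝ) : ℂ) + (-v : ℝ) * I = 1 - (u + v * I) by push_cast; ring] at h
  have hsum : ‖(u : ℂ) + v * I‖ + ‖1 - ((u : ℂ) + v * I)‖ ≤ 1 + v ^ 2 / ε := by
    have : v ^ 2 / (2 * ε) + v ^ 2 / (2 * ε) = v ^ 2 / ε := by field_simp; ring
    linarith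
  have hmain := (norm_sum_choose_mul_pow_mul_pow_mul_le _ _ hc).trans
    (mul_le_mul_of_nonneg_left (pow_le_pow_left₀ (by positivity) hsum m) hM)
  refine ⟨hmain, fun L _ hv => hmain.trans (mul_le_mul_of_nonneg_left ?_ hM)⟩
  calc (1 + v ^ 2 / ε) ^ m ≤ Real.exp (m * (v ^ 2 / ε)) :=
        Real.one_add_pow_le_exp_mul (by linarith [show 0 ≤ v ^ 2 / ε by positivity]) m
    _ ≤ Real.exp (L ^ 2 / ε) := by
      rw [← mul_div_assoc]
      gcongr
      exact mul_sq_le_sq_of_abs_le_div_sqrt hv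

/-- Bound on complex Bernstein-type sums: if `|c_k| ≤ M` for all `k`,
`ε ∈ (0, 1/2]`, and `w = u + iv` with `u ∈ [ε, 1-ε]`, then
`|∑_{k=0}^m (m choose k) w^k (1-w)^{m-k} c_k| ≤ M (1 + v²/ε)^m`; in particular, if
`|v| ≤ L/√m` for some `L > 0`, the sum is bounded in modulus by `M exp(L²/ε)`. -/
theorem bernstein_complex_bound (m : ℕ) (hm : 1 ≤ m) (ε M : ℝ)
    (hε : ε ∈ Set.Ioc (0 : ℝ) (1/2)) (hM : 0 ≤ M) (c : ℕ → ℂ)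
    (hc : ∀ k ≤ m, ‖c k‖ ≤ M) (u v : ℝ) (hu : u ∈ Set.Icc ε (1 - ε)) :
    ‖∑ k ∈ Finset.range (m + 1),
        (m.choose k : ℂ) * (u + v * Complex.I) ^ k * (1 - (u + v * Complex.I)) ^ (m - k) * c k‖
      ≤ M * (1 + v ^ 2 / ε) ^ m ∧
    ∀ L : ℝ, 0 < L → |v| ≤ L / Real.sqrt m →
      ‖∑ k ∈ Finset.range (m + 1),
          (m.choose k : ℂ) * (u + v * Complex.I) ^ k * (1 - (u + v * Complex.I)) ^ (m - k) * c k‖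
        ≤ M * Real.exp (L ^ 2 / ε) :=
  bernstein_complex_bound_general m ε M hε c hc u v hu
end

section
/- Let A be a p \times p Hermitian positive semidefinite complex matrix, r \in \mathbb{C}^p, and z \in \mathbb{C} with v = \mathrm{Im}\, z > 0. Then \big| \big( 1 + r^*(A - zI)^{-1} r \big)^{-1} \big| \leq |z| / v. -/
open Matrix
open scoped ComplexOrder

/-! For `w = (A - zI)⁻¹ r` one has `r*(A - zI)⁻¹ r = conj (w*(A - zI) w) = w*Aw - z̄ ‖w‖²`,
where `w*Aw ≥ 0`. Hence `Im (z (1 + r*(A - zI)⁻¹ r)) = Im z · (1 + w*Aw) ≥ Im z`, and since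
`Im ζ ≤ ‖ζ‖` this gives `Im z ≤ ‖z‖ ‖1 + r*(A - zI)⁻¹ r‖`. -/

namespace Complex

theorem norm_inv_le_norm_div_im {z s : ℂ} (hz : 0 < z.im) (h : z.im ≤ (z * s).im) :
    ‖s⁻¹‖ ≤ ‖z‖ / z.im := by
  have hzs : z.im ≤ ‖z‖ * ‖s‖ :=
    calc z.im ≤ (z * s).im := h
      _ ≤ ‖z * s‖ := im_le_norm _
      _ = ‖z‖ * ‖s‖ := norm_mul _ _
  have hs : 0 < ‖s‖ := pos_of_mul_pos_right (hz.trans_le hzs) (norm_nonneg z)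
  rw [norm_inv, inv_eq_one_div, div_le_div_iff₀ hs hz]
  linarith

end Complex

namespace Matrix

variable {n : Type*} [Fintype n]

theorem im_star_dotProduct_self (x : n → ℂ) : (star x ⬝ᵥ x).im = 0 :=
  (Complex.nonneg_iff.mp (dotProduct_star_self_nonneg x)).2.symm

variable [DecidableEq n]

theorem star_dotProduct_sub_smul_one_mulVec (A : Matrix n n ℂ) (z : ℂ) (x : n → ℂ) :
    star x ⬝ᵥ ((A - z • 1) *ᵥ x) = star x ⬝ᵥ (A *ᵥ x) - z * (star x ⬝ᵥ x) := by
  simp [sub_mulVec, smul_mulVec, dotProduct_sub, dotProduct_smul]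

variable {A : Matrix n n ℂ}

theorem IsHermitian.im_star_dotProduct_sub_smul_one_mulVec (hA : A.IsHermitian) (z : ℂ)
    (x : n → ℂ) :
    (star x ⬝ᵥ ((A - z • 1) *ᵥ x)).im = -(z.im * (star x ⬝ᵥ x).re) := by
  have hAx : (star x ⬝ᵥ (A *ᵥ x)).im = 0 := hA.im_star_dotProduct_mulVec_self x
  simp [star_dotProduct_sub_smul_one_mulVec, Complex.mul_im, hAx, im_star_dotProduct_self]

theorem IsHermitian.isUnit_det_sub_smul_one (hA : A.IsHermitian) {z : ℂ} (hz : z.im ≠ 0) :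
    IsUnit (A - z • 1).det := by
  rw [isUnit_iff_ne_zero]
  intro hdet
  obtain ⟨x, hx0, hx⟩ := exists_mulVec_eq_zero_iff.mpr hdet
  have hpos : 0 < (star x ⬝ᵥ x).re :=
    (Complex.pos_iff.mp (dotProduct_star_self_pos_iff.mpr hx0)).1
  have hzero := hA.im_star_dotProduct_sub_smul_one_mulVec z x
  rw [hx, dotProduct_zero, Complex.zero_im, zero_eq_neg] at hzero
  exact hz ((mul_eq_zero.mp hzero).resolve_right hpos.ne')

theorem IsHermitian.im_mul_one_add_star_sub_smul_one_mulVec_dotProduct (hA : A.IsHermitian)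
    (z : ℂ) (w : n → ℂ) :
    (z * (1 + star ((A - z • 1) *ᵥ w) ⬝ᵥ w)).im =
      z.im * (1 + (star w ⬝ᵥ (A *ᵥ w)).re) := by
  have hAw : (star w ⬝ᵥ (A *ᵥ w)).im = 0 := hA.im_star_dotProduct_mulVec_self w
  rw [star_dotProduct, star_dotProduct_sub_smul_one_mulVec]
  simp only [star_sub, RCLike.star_def, star_mul', Complex.mul_im, Complex.add_im, Complex.one_im,
    Complex.sub_im, Complex.conj_im, hAw, neg_zero, Complex.conj_re, im_star_dotProduct_self,
    mul_zero, neg_mul, zero_add, sub_neg_eq_add, Complex.add_re, Complex.one_re, Complex.sub_re,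
    Complex.mul_re, sub_zero]
  ring

end Matrix

/-- For a positive semidefinite matrix `A`, a vector `r` and `z` with
`v = Im z > 0`, one has `|(1 + r*(A - zI)⁻¹ r)⁻¹| ≤ |z| / v`. -/
theorem abs_inv_one_add_quadForm_resolvent_le {p : ℕ} (A : Matrix (Fin p) (Fin p) ℂ)
    (hA : A.PosSemidef) (r : Fin p → ℂ) (z : ℂ) (hz : 0 < z.im) :
    ‖(1 + star r ⬝ᵥ ((A - z • (1 : Matrix (Fin p) (Fin p) ℂ))⁻¹ *ᵥ r))⁻¹‖
      ≤ ‖z‖ / z.im := by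
  set B := A - z • (1 : Matrix (Fin p) (Fin p) ℂ)
  have hB : IsUnit B.det := hA.isHermitian.isUnit_det_sub_smul_one hz.ne'
  set w := B⁻¹ *ᵥ r
  have hr : r = B *ᵥ w := by rw [mulVec_mulVec, mul_nonsing_inv _ hB, one_mulVec]
  have hAw : 0 ≤ (star w ⬝ᵥ (A *ᵥ w)).re :=
    (Complex.nonneg_iff.mp (hA.dotProduct_mulVec_nonneg w)).1
  apply Complex.norm_inv_le_norm_div_im hz
  rw [hr, hA.isHermitian.im_mul_one_add_star_sub_smul_one_mulVec_dotProduct]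
  exact le_mul_of_one_le_right hz.le (le_add_of_nonneg_right hAw)
end

section
/- Let B be a p \times p Hermitian complex matrix, r \in \mathbb{C}^p, and z \in \mathbb{C} with \mathrm{Im}\, z \neq 0. Then \mathrm{tr}\Big( (B + r r^* - zI)^{-1} - (B - zI)^{-1} \Big) = - \big( 1 + r^*(B - zI)^{-1} r \big)^{-1} \, r^* (B - zI)^{-2} r. -/
open Matrix

/-!
Write `M = B - zI`. As `B` and `B + rr*` are Hermitian, hence have real spectrum, `M` and
`M + rr*` are invertible, so by the matrix determinant lemma
`det (M + rr*) = det M · (1 + r*M⁻¹r)` the scalar `1 + r*M⁻¹r` is nonzero. The Sherman–Morrison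
formula then gives `(M + rr*)⁻¹ - M⁻¹ = -(1 + r*M⁻¹r)⁻¹ (M⁻¹r)(r*M⁻¹)`, a rank-one matrix whose
trace is `r*M⁻²r`.
-/

namespace Matrix

variable {m K : Type*} [Fintype m] [DecidableEq m] [Field K]

theorem det_add_vecMulVec {R : Type*} [CommRing R] {A : Matrix m m R} (hA : IsUnit A.det)
    (u v : m → R) : (A + vecMulVec u v).det = A.det * (1 + v ⬝ᵥ (A⁻¹ *ᵥ u)) := by
  rw [vecMulVec_eq Unit, det_add_replicateCol_mul_replicateRow hA, Matrix.mul_assoc,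
    ← replicateCol_mulVec, det_unique (1 + _), add_apply, one_apply_eq,
    replicateRow_mul_replicateCol_apply]

theorem inv_add_vecMulVec {A : Matrix m m K} (hA : IsUnit A.det) {u v : m → K}
    (hd : 1 + v ⬝ᵥ (A⁻¹ *ᵥ u) ≠ 0) :
    (A + vecMulVec u v)⁻¹ =
      A⁻¹ - (1 + v ⬝ᵥ (A⁻¹ *ᵥ u))⁻¹ • vecMulVec (A⁻¹ *ᵥ u) (v ᵥ* A⁻¹) := by
  set d := 1 + v ⬝ᵥ (A⁻¹ *ᵥ u) with hd_def
  set w := v ᵥ* A⁻¹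
  have hA_mul : A * vecMulVec (A⁻¹ *ᵥ u) w = vecMulVec u w := by
    rw [mul_vecMulVec, mulVec_mulVec, mul_nonsing_inv A hA, one_mulVec]
  have hvecMulVec_mul : vecMulVec u v * vecMulVec (A⁻¹ *ᵥ u) w = (d - 1) • vecMulVec u w := by
    rw [vecMulVec_mul_vecMulVec, vecMulVec_smul, hd_def, add_sub_cancel_left]
  apply inv_eq_right_inv
  calc (A + vecMulVec u v) * (A⁻¹ - d⁻¹ • vecMulVec (A⁻¹ *ᵥ u) w)
      = 1 + (1 - d⁻¹ * d) • vecMulVec u w := by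
        rw [add_mul, mul_sub, mul_sub, mul_nonsing_inv A hA, vecMulVec_mul, mul_smul_comm,
          mul_smul_comm, hA_mul, hvecMulVec_mul, smul_smul, mul_sub, sub_smul, sub_smul, one_smul,
          mul_one]
        abel
    _ = 1 := by rw [inv_mul_cancel₀ hd, sub_self, zero_smul, add_zero]

theorem trace_inv_add_vecMulVec_sub_inv {A : Matrix m m K} (hA : IsUnit A.det) {u v : m → K}
    (hAuv : IsUnit (A + vecMulVec u v).det) :
    trace ((A + vecMulVec u v)⁻¹ - A⁻¹) =
      -(1 + v ⬝ᵥ (A⁻¹ *ᵥ u))⁻¹ * (v ⬝ᵥ ((A⁻¹ ^ 2) *ᵥ u)) := by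
  have hd : 1 + v ⬝ᵥ (A⁻¹ *ᵥ u) ≠ 0 := by
    rintro h
    rw [det_add_vecMulVec hA, h, mul_zero] at hAuv
    exact not_isUnit_zero hAuv
  rw [inv_add_vecMulVec hA hd, sub_sub_cancel_left, trace_neg, trace_smul, trace_vecMulVec,
    dotProduct_comm (A⁻¹ *ᵥ u), ← dotProduct_mulVec, mulVec_mulVec, ← sq, smul_eq_mul, neg_mul]

theorem IsHermitian.isUnit_sub_smul_one {𝕜 : Type*} [RCLike 𝕜] {A : Matrix m m 𝕜}
    (hA : A.IsHermitian) {z : 𝕜} (hz : RCLike.im z ≠ 0) : IsUnit (A - z • 1) := by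
  have hz_spec : z ∉ spectrum 𝕜 A := by
    rw [hA.spectrum_eq_image_range]
    rintro ⟨x, -, rfl⟩
    exact hz (RCLike.ofReal_im x)
  rw [spectrum.notMem_iff, ← IsUnit.neg_iff, neg_sub, Algebra.algebraMap_eq_smul_one] at hz_spec
  exact hz_spec

end Matrix

/-- Trace of the rank-one resolvent perturbation: for Hermitian `B`,
vector `r` and `z` with nonzero imaginary part,
`tr((B + rr* - zI)⁻¹ - (B - zI)⁻¹) = -(1 + r*(B-zI)⁻¹r)⁻¹ · r*(B-zI)⁻²r`. -/
theorem trace_resolvent_rank_one_perturbation {p : ℕ} (B : Matrix (Fin p) (Fin p) ℂ)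
    (hB : B.IsHermitian) (r : Fin p → ℂ) (z : ℂ) (hz : z.im ≠ 0) :
    Matrix.trace
        ((B + vecMulVec r (star r) - z • (1 : Matrix (Fin p) (Fin p) ℂ))⁻¹
          - (B - z • (1 : Matrix (Fin p) (Fin p) ℂ))⁻¹)
      = -(1 + star r ⬝ᵥ ((B - z • (1 : Matrix (Fin p) (Fin p) ℂ))⁻¹ *ᵥ r))⁻¹ *
          (star r ⬝ᵥ (((B - z • (1 : Matrix (Fin p) (Fin p) ℂ))⁻¹ ^ 2) *ᵥ r)) := by
  have hBr : (B + vecMulVec r (star r)).IsHermitian :=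
    hB.add (by rw [IsHermitian, conjTranspose_vecMulVec, star_star])
  have hM := (isUnit_iff_isUnit_det _).mp (hB.isUnit_sub_smul_one hz)
  have hMr := (isUnit_iff_isUnit_det _).mp (hBr.isUnit_sub_smul_one hz)
  rw [add_sub_right_comm] at hMr ⊢
  exact trace_inv_add_vecMulVec_sub_inv hM hMr
end

section
/- Let B be a p \times p Hermitian complex matrix, r \in \mathbb{C}^p, z \in \mathbb{C} with v = \mathrm{Im}\, z > 0, and let M be any p \times p complex matrix. Then \Big| \mathrm{tr}\Big( \big( (B + r r^* - zI)^{-1} - (B - zI)^{-1} \big) M \Big) \Big| \leq \|M\| / v. -/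
/-!
Write `R = (B - z)⁻¹`. The rank-one resolvent identity gives
`tr(((B + rr* - z)⁻¹ - R) M) = -(r* R M R r) / (1 + r* R r)`. By Cauchy–Schwarz the numerator
`⟪R* r, M R r⟫` is at most `‖M‖ ‖R* r‖ ‖R r‖`. Since `B` is Hermitian, `Im (r* R r)` equals both
`Im z ‖R r‖²` and `Im z ‖R* r‖²`, so by AM–GM `|1 + r* R r| ≥ Im z ‖R* r‖ ‖R r‖`.
-/

open Matrix WithLp

theorem mul_mul_le_of_mul_sq_le {v a b c : ℝ} (hv : 0 ≤ v) (hac : v * a ^ 2 ≤ c)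
    (hbc : v * b ^ 2 ≤ c) : v * (a * b) ≤ c := by
  nlinarith [mul_nonneg hv (sq_nonneg (a - b))]

namespace Matrix

section Field

variable {n K : Type*} [Fintype n] [DecidableEq n] [Field K]

theorem inv_add_vecMulVec_mulVec {A : Matrix n n K} (hA : IsUnit A.det) (a b : n → K)
    (hAab : IsUnit (A + vecMulVec a b).det) :
    (A + vecMulVec a b)⁻¹ *ᵥ a = (1 + b ⬝ᵥ (A⁻¹ *ᵥ a))⁻¹ • (A⁻¹ *ᵥ a) := by
  set x := A⁻¹ *ᵥ a
  have hAx : A *ᵥ x = a := by rw [mulVec_mulVec, mul_nonsing_inv _ hA, one_mulVec]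
  have hAabx : (A + vecMulVec a b) *ᵥ x = (1 + b ⬝ᵥ x) • a := by
    rw [add_mulVec, hAx, vecMulVec_mulVec, op_smul_eq_smul, add_smul, one_smul]
  have hx : x = (1 + b ⬝ᵥ x) • (A + vecMulVec a b)⁻¹ *ᵥ a := by
    rw [← mulVec_smul, ← hAabx, mulVec_mulVec, nonsing_inv_mul _ hAab, one_mulVec]
  by_cases hs : 1 + b ⬝ᵥ x = 0
  · have hx0 : x = 0 := by rw [hx, hs, zero_smul]
    rw [← hAx, hx0, mulVec_zero, mulVec_zero, smul_zero]
  · exact (eq_inv_smul_iff₀ hs).2 hx.symm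

theorem trace_inv_add_vecMulVec_sub_inv_mul {A : Matrix n n K} (hA : IsUnit A.det) (a b : n → K)
    (hAab : IsUnit (A + vecMulVec a b).det) (M : Matrix n n K) :
    trace (((A + vecMulVec a b)⁻¹ - A⁻¹) * M) =
      -(b ⬝ᵥ (A⁻¹ *ᵥ (M *ᵥ (A⁻¹ *ᵥ a)))) / (1 + b ⬝ᵥ (A⁻¹ *ᵥ a)) := by
  have hdiff : (A + vecMulVec a b)⁻¹ - A⁻¹ =
      -((A + vecMulVec a b)⁻¹ * vecMulVec a b * A⁻¹) := by
    rw [inv_sub_inv (by simp only [isUnit_iff_isUnit_det, hA, hAab]), sub_add_cancel_left,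
      Matrix.mul_neg, Matrix.neg_mul]
  rw [hdiff, Matrix.neg_mul, trace_neg, Matrix.mul_assoc, Matrix.mul_assoc, trace_mul_comm,
    Matrix.mul_assoc, vecMulVec_mul, trace_vecMulVec, dotProduct_comm, ← dotProduct_mulVec,
    ← mulVec_mulVec, ← mulVec_mulVec, inv_add_vecMulVec_mulVec hA a b hAab, mulVec_smul,
    mulVec_smul, dotProduct_smul, smul_eq_mul, div_eq_mul_inv, neg_mul, mul_comm]

end Field

section RCLike

variable {n 𝕜 : Type*} [Fintype n] [RCLike 𝕜]

theorem star_dotProduct_self_eq_norm_sq (x : n → 𝕜) :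
    star x ⬝ᵥ x = (‖toLp 2 x‖ : 𝕜) ^ 2 := by
  rw [dotProduct_comm, ← EuclideanSpace.inner_toLp_toLp]
  exact inner_self_eq_norm_sq_to_K _

theorem norm_star_dotProduct_mulVec_le [DecidableEq n] (a x : n → 𝕜) (N : Matrix n n 𝕜) :
    ‖star a ⬝ᵥ (N *ᵥ x)‖ ≤ ‖toLp 2 a‖ * (‖toEuclideanCLM (𝕜 := 𝕜) N‖ * ‖toLp 2 x‖) := by
  rw [dotProduct_comm, ← EuclideanSpace.inner_toLp_toLp, ← toEuclideanCLM_toLp]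
  exact (norm_inner_le_norm _ _).trans (by gcongr; exact ContinuousLinearMap.le_opNorm _ _)

end RCLike

namespace IsHermitian

variable {n : Type*} [Fintype n] [DecidableEq n] {A : Matrix n n ℂ}

theorem im_star_dotProduct_sub_smul_one_mulVec_s15 (hA : A.IsHermitian) (w : ℂ) (x : n → ℂ) :
    (star x ⬝ᵥ ((A - w • 1) *ᵥ x)).im = -w.im * ‖toLp 2 x‖ ^ 2 := by
  have hAx : (star x ⬝ᵥ (A *ᵥ x)).im = 0 := hA.im_star_dotProduct_mulVec_self x
  rw [sub_mulVec, smul_mulVec, one_mulVec, dotProduct_sub, dotProduct_smul, smul_eq_mul,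
    star_dotProduct_self_eq_norm_sq, Complex.sub_im, hAx]
  simp [← Complex.ofReal_pow]

theorem isUnit_det_sub_smul_one_s15 (hA : A.IsHermitian) {w : ℂ} (hw : w.im ≠ 0) :
    IsUnit (A - w • 1).det := by
  rw [isUnit_iff_ne_zero]
  intro hdet
  obtain ⟨x, hx, hAx⟩ := exists_mulVec_eq_zero_iff.2 hdet
  have := hA.im_star_dotProduct_sub_smul_one_mulVec_s15 w x
  rw [hAx, dotProduct_zero, Complex.zero_im, eq_comm, mul_eq_zero, neg_eq_zero] at this
  exact this.elim hw fun h ↦ hx (by simpa using h)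

theorem im_star_dotProduct_inv_sub_smul_one_mulVec (hA : A.IsHermitian) {w : ℂ} (hw : w.im ≠ 0)
    (r : n → ℂ) :
    (star r ⬝ᵥ ((A - w • 1)⁻¹ *ᵥ r)).im = w.im * ‖toLp 2 ((A - w • 1)⁻¹ *ᵥ r)‖ ^ 2 := by
  set u := (A - w • 1)⁻¹ *ᵥ r
  have hr : (A - w • 1) *ᵥ u = r := by
    rw [mulVec_mulVec, mul_nonsing_inv _ (hA.isUnit_det_sub_smul_one_s15 hw), one_mulVec]
  rw [← hr, star_dotProduct, Complex.star_def, Complex.conj_im,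
    hA.im_star_dotProduct_sub_smul_one_mulVec_s15, neg_mul, neg_neg]

theorem im_star_dotProduct_inv_sub_smul_one_mulVec_conjTranspose (hA : A.IsHermitian) {w : ℂ}
    (hw : w.im ≠ 0) (r : n → ℂ) :
    (star r ⬝ᵥ ((A - w • 1)⁻¹ *ᵥ r)).im = w.im * ‖toLp 2 ((A - w • 1)⁻¹ᴴ *ᵥ r)‖ ^ 2 := by
  have hw' : (star w).im ≠ 0 := by simpa [Complex.star_def] using hw
  rw [star_dotProduct, star_mulVec, ← dotProduct_mulVec, Complex.star_def, Complex.conj_im,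
    conjTranspose_nonsing_inv, conjTranspose_sub, conjTranspose_smul, conjTranspose_one, hA.eq,
    hA.im_star_dotProduct_inv_sub_smul_one_mulVec hw', Complex.star_def, Complex.conj_im,
    neg_mul, neg_neg]

theorem im_mul_norm_mul_norm_le_norm_one_add (hA : A.IsHermitian) {w : ℂ} (hw : 0 < w.im)
    (r : n → ℂ) :
    w.im * (‖toLp 2 ((A - w • 1)⁻¹ᴴ *ᵥ r)‖ * ‖toLp 2 ((A - w • 1)⁻¹ *ᵥ r)‖) ≤
      ‖1 + star r ⬝ᵥ ((A - w • 1)⁻¹ *ᵥ r)‖ := by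
  have him : ∀ t : ℝ, (star r ⬝ᵥ ((A - w • 1)⁻¹ *ᵥ r)).im = w.im * t →
      w.im * t ≤ ‖1 + star r ⬝ᵥ ((A - w • 1)⁻¹ *ᵥ r)‖ := fun t ht ↦ by
    rw [← ht, ← zero_add (star r ⬝ᵥ _).im, ← Complex.one_im, ← Complex.add_im]
    exact Complex.im_le_norm _
  exact mul_mul_le_of_mul_sq_le hw.le
    (him _ (hA.im_star_dotProduct_inv_sub_smul_one_mulVec_conjTranspose hw.ne' r))
    (him _ (hA.im_star_dotProduct_inv_sub_smul_one_mulVec hw.ne' r))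

end IsHermitian

end Matrix

/-- For Hermitian `B`, vector `r`, `z` with `v = Im z > 0`, and any matrix
`M`, `|tr(((B + rr* - zI)⁻¹ - (B - zI)⁻¹) M)| ≤ ‖M‖ / v`, where `‖M‖` is the operator
norm of `M` acting on the Euclidean space `ℂᵖ`. -/
theorem abs_trace_resolvent_diff_mul_le {p : ℕ} (B : Matrix (Fin p) (Fin p) ℂ)
    (hB : B.IsHermitian) (r : Fin p → ℂ) (z : ℂ) (hz : 0 < z.im)
    (M : Matrix (Fin p) (Fin p) ℂ) :
    ‖(Matrix.trace
          (((B + vecMulVec r (star r) - z • (1 : Matrix (Fin p) (Fin p) ℂ))⁻¹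
              - (B - z • (1 : Matrix (Fin p) (Fin p) ℂ))⁻¹) * M))‖
      ≤ ‖Matrix.toEuclideanCLM (𝕜 := ℂ) M‖ / z.im := by
  have hBr : (B + vecMulVec r (star r)).IsHermitian :=
    hB.add (by rw [IsHermitian, conjTranspose_vecMulVec, star_star])
  have hunit := hBr.isUnit_det_sub_smul_one_s15 hz.ne'
  rw [add_sub_right_comm] at hunit ⊢
  rw [trace_inv_add_vecMulVec_sub_inv_mul (hB.isUnit_det_sub_smul_one_s15 hz.ne') r (star r) hunit,
    norm_div, norm_neg]
  set R := (B - z • (1 : Matrix (Fin p) (Fin p) ℂ))⁻¹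
  have hnum : star r ⬝ᵥ (R *ᵥ (M *ᵥ (R *ᵥ r))) = star (Rᴴ *ᵥ r) ⬝ᵥ (M *ᵥ (R *ᵥ r)) := by
    rw [star_mulVec, conjTranspose_conjTranspose, dotProduct_mulVec]
  refine div_le_of_le_mul₀ (norm_nonneg _) (by positivity) ?_
  calc ‖star r ⬝ᵥ (R *ᵥ (M *ᵥ (R *ᵥ r)))‖
      ≤ ‖toLp 2 (Rᴴ *ᵥ r)‖ * (‖toEuclideanCLM (𝕜 := ℂ) M‖ * ‖toLp 2 (R *ᵥ r)‖) :=
        hnum ▸ norm_star_dotProduct_mulVec_le _ _ _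
    _ = ‖toEuclideanCLM (𝕜 := ℂ) M‖ / z.im *
          (z.im * (‖toLp 2 (Rᴴ *ᵥ r)‖ * ‖toLp 2 (R *ᵥ r)‖)) := by
        field_simp
    _ ≤ ‖toEuclideanCLM (𝕜 := ℂ) M‖ / z.im * ‖1 + star r ⬝ᵥ (R *ᵥ r)‖ := by
        gcongr
        exact hB.im_mul_norm_mul_norm_le_norm_one_add hz r
end

section
/- Let X be a p \times n complex matrix with columns x_1, \dots, x_n, set r_j = x_j/\sqrt{n}, B = n^{-1} X X^* = \sum_{j=1}^n r_j r_j^*, and for z \in \mathbb{C} with \mathrm{Im}\, z > 0 let D(z) = B - z I_p and D_j(z) = D(z) - r_j r_j^*. Then \mathrm{tr}\big( (n^{-1} X^* X - z I_n)^{-1} \big) = -\frac{1}{z} \sum_{j=1}^n \big( 1 + r_j^* D_j(z)^{-1} r_j \big)^{-1}. -/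
/-!
Put `R = X/√n`, whose columns are the `r_j`, so that `n⁻¹X*X = R*R` and `n⁻¹XX* = RR*`.
Pushing `R` through the resolvent, `(R*R - z)⁻¹ = z⁻¹ (R*(RR* - z)⁻¹R - 1)`, whose `j`-th diagonal
entry is `z⁻¹ (r_j* D⁻¹ r_j - 1)`. As `D = D_j + r_j r_j*`, the Sherman–Morrison formula gives
`r_j* D⁻¹ r_j = 1 - (1 + r_j* D_j⁻¹ r_j)⁻¹`. All the resolvents exist because Hermitian matrices
have real eigenvalues.
-/

open Matrix

theorem Matrix.IsHermitian.isUnit_sub_smul_one_s17 {𝕜 n : Type*} [RCLike 𝕜] [Fintype n]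
    [DecidableEq n] {A : Matrix n n 𝕜} (hA : A.IsHermitian) {z : 𝕜} (hz : RCLike.im z ≠ 0) :
    IsUnit (A - z • 1) := by
  rw [isUnit_iff_isUnit_det, isUnit_iff_ne_zero]
  intro hdet
  obtain ⟨v, hv0, hv⟩ := exists_mulVec_eq_zero_iff.mpr hdet
  have hAv : toEuclideanLin A (WithLp.toLp 2 v) = z • WithLp.toLp 2 v := by
    rw [sub_mulVec, smul_mulVec, one_mulVec, sub_eq_zero] at hv
    simp [hv]
  have hz_eig : Module.End.HasEigenvalue (toEuclideanLin A) z :=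
    Module.End.hasEigenvalue_of_hasEigenvector
      ⟨Module.End.mem_eigenspace_iff.mpr hAv, by simpa using hv0⟩
  exact hz (RCLike.conj_eq_iff_im.mp
    ((isSymmetric_toEuclideanLin_iff.mpr hA).conj_eigenvalue_eq_self hz_eig))

theorem Matrix.inv_mul_sub_smul_one {K m n : Type*} [Field K] [Fintype m] [DecidableEq m]
    [Fintype n] [DecidableEq n] {A : Matrix m n K} {B : Matrix n m K} {z : K} (hz : z ≠ 0)
    (hAB : IsUnit (A * B - z • 1)) :
    (B * A - z • 1)⁻¹ = z⁻¹ • (B * (A * B - z • 1)⁻¹ * A - 1) := by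
  set N := A * B - z • 1
  have hpush : (B * A - z • 1) * B = B * N := by
    simp only [N, Matrix.mul_sub, Matrix.sub_mul, Matrix.mul_assoc, Matrix.mul_smul,
      Matrix.smul_mul, Matrix.mul_one, Matrix.one_mul]
  apply inv_eq_right_inv
  calc (B * A - z • 1) * (z⁻¹ • (B * N⁻¹ * A - 1))
      = z⁻¹ • ((B * A - z • 1) * B * N⁻¹ * A - (B * A - z • 1)) := by
        rw [Matrix.mul_smul, Matrix.mul_sub, Matrix.mul_one, Matrix.mul_assoc,
          Matrix.mul_assoc, Matrix.mul_assoc]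
    _ = z⁻¹ • (z • 1) := by
        rw [hpush, Matrix.mul_assoc B, mul_nonsing_inv N ((isUnit_iff_isUnit_det N).mp hAB),
          Matrix.mul_one, sub_sub_cancel]
    _ = 1 := inv_smul_smul₀ hz 1

theorem Matrix.conjTranspose_mul_mul_apply_self {α m n : Type*} [NonUnitalSemiring α] [Star α]
    [Fintype m] (R : Matrix m n α) (M : Matrix m m α) (j : n) :
    (Rᴴ * M * R) j j = star (R.col j) ⬝ᵥ (M *ᵥ R.col j) := by
  simp only [mul_apply, mulVec, dotProduct, Finset.sum_mul, Finset.mul_sum, mul_assoc]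
  exact Finset.sum_comm

theorem Matrix.dotProduct_inv_add_vecMulVec_mulVec {K m : Type*} [Field K] [Fintype m]
    [DecidableEq m] {M : Matrix m m K} {u v : m → K} (hM : IsUnit M)
    (hMuv : IsUnit (M + vecMulVec u v)) :
    v ⬝ᵥ ((M + vecMulVec u v)⁻¹ *ᵥ u) = 1 - (1 + v ⬝ᵥ (M⁻¹ *ᵥ u))⁻¹ := by
  set N := M + vecMulVec u v
  set w := M⁻¹ *ᵥ u
  set β := v ⬝ᵥ w
  have hNw : N *ᵥ w = (1 + β) • u := by
    rw [add_mulVec, mulVec_mulVec, mul_nonsing_inv M ((isUnit_iff_isUnit_det M).mp hM),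
      one_mulVec, vecMulVec_mulVec, op_smul_eq_smul, add_smul, one_smul]
  have hβ : 1 + β ≠ 0 := by
    intro h
    have hw : w = 0 := mulVec_injective_iff_isUnit.mpr hMuv (by simp [hNw, h])
    simp [β, hw] at h
  have hN_inv_u : N⁻¹ *ᵥ u = (1 + β)⁻¹ • w := by
    have h : N⁻¹ *ᵥ ((1 + β) • u) = w := by
      rw [← hNw, mulVec_mulVec, nonsing_inv_mul N ((isUnit_iff_isUnit_det N).mp hMuv),
        one_mulVec]
    rw [← h, mulVec_smul, smul_smul, inv_mul_cancel₀ hβ, one_smul]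
  rw [hN_inv_u, dotProduct_smul, smul_eq_mul]
  field_simp
  ring

theorem Matrix.trace_inv_conjTranspose_mul_self_sub_smul_one {𝕜 m n : Type*} [RCLike 𝕜]
    [Fintype m] [DecidableEq m] [Fintype n] [DecidableEq n] (R : Matrix m n 𝕜) {z : 𝕜}
    (hz : RCLike.im z ≠ 0) :
    trace ((Rᴴ * R - z • 1)⁻¹) = -(1 / z) * ∑ j, (1 + star (R.col j) ⬝ᵥ
      ((R * Rᴴ - z • 1 - vecMulVec (R.col j) (star (R.col j)))⁻¹ *ᵥ R.col j))⁻¹ := by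
  have hz0 : z ≠ 0 := by rintro rfl; simp at hz
  have hRR : (R * Rᴴ).IsHermitian := isHermitian_mul_conjTranspose_self R
  have hD_j (j : n) : IsUnit (R * Rᴴ - z • 1 - vecMulVec (R.col j) (star (R.col j))) := by
    rw [sub_right_comm]
    exact (hRR.sub (by simp [IsHermitian])).isUnit_sub_smul_one_s17 hz
  have hsherman (j : n) := dotProduct_inv_add_vecMulVec_mulVec (hD_j j)
    (by rw [sub_add_cancel]; exact hRR.isUnit_sub_smul_one_s17 hz)
  simp only [sub_add_cancel] at hsherman
  rw [inv_mul_sub_smul_one hz0 (hRR.isUnit_sub_smul_one_s17 hz), trace, Finset.mul_sum]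
  refine Finset.sum_congr rfl fun j _ => ?_
  rw [diag_apply, smul_apply, sub_apply, one_apply_eq, conjTranspose_mul_mul_apply_self,
    hsherman, smul_eq_mul]
  ring

/-- With `r_j = x_j/√n` the scaled columns of `X`, `B = n⁻¹ X X*`,
`D(z) = B - zI_p`, `D_j(z) = D(z) - r_j r_j*`, and `Im z > 0`,
`tr((n⁻¹ X*X - z I_n)⁻¹) = -(1/z) ∑_j (1 + r_j* D_j(z)⁻¹ r_j)⁻¹`. -/
theorem trace_companion_resolvent_eq_sum_beta {p n : ℕ} (X : Matrix (Fin p) (Fin n) ℂ)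
    (z : ℂ) (hz : 0 < z.im) (r : Fin n → Fin p → ℂ)
    (hr : ∀ j i, r j i = X i j / (Real.sqrt n : ℂ)) :
    Matrix.trace (((n : ℂ)⁻¹ • (Xᴴ * X) - z • (1 : Matrix (Fin n) (Fin n) ℂ))⁻¹)
      = -(1 / z) * ∑ j : Fin n,
          (1 + star (r j) ⬝ᵥ
            ((((n : ℂ)⁻¹ • (X * Xᴴ) - z • (1 : Matrix (Fin p) (Fin p) ℂ))
                - vecMulVec (r j) (star (r j)))⁻¹ *ᵥ (r j)))⁻¹ := by
  set R := (Real.sqrt n : ℂ)⁻¹ • X with hR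
  have hr_col : r = R.col := by
    ext j i
    rw [hr, col_apply, hR, Matrix.smul_apply, smul_eq_mul, div_eq_inv_mul]
  have hscale : star (Real.sqrt n : ℂ)⁻¹ * (Real.sqrt n : ℂ)⁻¹ = (n : ℂ)⁻¹ := by
    rw [star_inv₀, Complex.star_def, Complex.conj_ofReal, ← mul_inv, ← Complex.ofReal_mul,
      Real.mul_self_sqrt n.cast_nonneg, Complex.ofReal_natCast]
  have hRR : (n : ℂ)⁻¹ • (Xᴴ * X) = Rᴴ * R := by
    rw [hR, conjTranspose_smul, Matrix.smul_mul, Matrix.mul_smul, smul_smul, hscale]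
  have hRR' : (n : ℂ)⁻¹ • (X * Xᴴ) = R * Rᴴ := by
    rw [hR, conjTranspose_smul, Matrix.smul_mul, Matrix.mul_smul, smul_smul, mul_comm, hscale]
  rw [hr_col, hRR, hRR']
  exact trace_inv_conjTranspose_mul_self_sub_smul_one R hz.ne'
end
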